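/- arXiv:2510.14068 — 2 statements merged into one kernel-verified Lean document; each statement's English description precedes it below -/
import Mathlib

section
/- Fix ℓ ≥ 2 and d = (d_1,…,d_ℓ), r = (r_1,…,r_ℓ) ∈ ℕ^ℓ with d_1 = n, d_i ≥ 2 and r_i ≥ 2 for all i, and set m_ℓ := Σ_{k=1}^ℓ (r_k − 1)·∏_{i=k+1}^ℓ d_i. If n ≥ m_ℓ + 1, then N_n(ℓ,d,r) ⊊ N_n(ℓ,r): there is a function computable by an unconstrained rank-r maxout network with ℓ hidden layers (in fact, by a rank-2 maxout network with two hidden layers) that is not computable by any indegree-d-constrained rank-r maxout network with ℓ hidden layers, regardless of its width. -/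
open Pointwise

noncomputable section SparseMaxout

/-- Vectors in `ℝ^n`. -/
abbrev Vec (n : ℕ) := Fin n → ℝ

/-- A polytope is the convex hull of a finite nonempty set of points. -/
def IsPolytope {n : ℕ} (P : Set (Vec n)) : Prop :=
  ∃ s : Finset (Vec n), s.Nonempty ∧ P = convexHull ℝ (s : Set (Vec n))

/-- A simplex is the convex hull of a finite nonempty affinely independent set of points. -/
def IsSimplex {n : ℕ} (S : Set (Vec n)) : Prop :=
  ∃ (k : ℕ) (pts : Fin k → Vec n), 0 < k ∧ AffineIndependent ℝ pts ∧
    S = convexHull ℝ (Set.range pts)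

/-- The support function `f_P(x) = max_{a ∈ P} ⟨a, x⟩` of a set `P`. -/
def suppFn {n : ℕ} (P : Set (Vec n)) (x : Vec n) : ℝ :=
  sSup ((fun a => ∑ i, a i * x i) '' P)

/-- The dimension of a polytope: the dimension of its affine hull. -/
def polyDim {n : ℕ} (P : Set (Vec n)) : ℕ :=
  Module.finrank ℝ (affineSpan ℝ P).direction

/-- A (representative of a) virtual polytope: a pair `(P, Q)` standing for `P - Q`. -/
abbrev VP (n : ℕ) := Set (Vec n) × Set (Vec n)

/-- Two pairs represent the same virtual polytope: `P₁ - Q₁ = P₂ - Q₂` iff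
`P₁ + Q₂ = P₂ + Q₁` (Minkowski sums). -/
def vEquiv {n : ℕ} (A B : VP n) : Prop :=
  A.1 + B.2 = B.1 + A.2

/-- Both components are polytopes. -/
def IsPolyPair {n : ℕ} (A : VP n) : Prop :=
  IsPolytope A.1 ∧ IsPolytope A.2

/-- Scalar multiple of a virtual polytope: `λ(P - Q) := λP - λQ`. -/
def vSMul {n : ℕ} (c : ℝ) (A : VP n) : VP n := (c • A.1, c • A.2)

/-- Convex hull of finitely many virtual polytopes:
`conv(P₁-Q₁, …, P_m-Q_m) := conv(⋃ᵢ (Pᵢ + Σ_{k≠i} Q_k)) - Σ_k Q_k`. -/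
def vConv {n m : ℕ} (V : Fin m → VP n) : VP n :=
  (convexHull ℝ (⋃ i, ((V i).1 + ∑ k ∈ Finset.univ.erase i, (V k).2)),
   ∑ k, (V k).2)

/-- The dimension of a virtual polytope: `min{dim(A + B) : V = A - B}` over
polytope representations. -/
def vDim {n : ℕ} (V : VP n) : ℕ :=
  sInf {m | ∃ A B : Set (Vec n), IsPolytope A ∧ IsPolytope B ∧
    vEquiv (A, B) V ∧ polyDim (A + B) = m}

/-- Support function of a virtual polytope: `f_{P-Q} := f_P - f_Q`. -/
def vSuppFn {n : ℕ} (V : VP n) (x : Vec n) : ℝ :=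
  suppFn V.1 x - suppFn V.2 x

/-- The recursively defined classes `Q̂_ℓ` of virtual polytopes dual to sparse maxout
networks with indegree constraints `d` and ranks `r` (layer `k` uses `d k`, `r k`);
membership is up to equality of virtual polytopes. -/
def Qhat (n : ℕ) (d r : ℕ → ℕ) : ℕ → Set (VP n)
  | 0 => {V | IsPolyPair V ∧ ∃ v : Vec n, vEquiv V ({v}, {0})}
  | (k+1) => {V | IsPolyPair V ∧
      ∃ (α : Fin (r (k+1)) → Fin (d (k+1)) → ℝ) (W : Fin (d (k+1)) → VP n),
        (∀ j, W j ∈ Qhat n d r k) ∧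
        vEquiv V (vConv (fun i => ∑ j, vSMul (α i j) (W j)))}

/-- `Q_n(ℓ,d,r)`: finite real linear combinations of elements of `Q̂_ℓ`. -/
def Qfull (n : ℕ) (d r : ℕ → ℕ) (ℓ : ℕ) : Set (VP n) :=
  {V | IsPolyPair V ∧ ∃ (p : ℕ) (c : Fin p → ℝ) (W : Fin p → VP n),
    (∀ i, W i ∈ Qhat n d r ℓ) ∧ vEquiv V (∑ i, vSMul (c i) (W i))}

/-- `m_ℓ = Σ_{k=1}^ℓ (r_k - 1) ∏_{i=k+1}^ℓ d_i`. -/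
def mval (d r : ℕ → ℕ) (ℓ : ℕ) : ℕ :=
  ∑ k ∈ Finset.Icc 1 ℓ, (r k - 1) * ∏ i ∈ Finset.Icc (k+1) ℓ, d i

/-- The recursively defined classes `N̂_ℓ` of functions computed by a single output
neuron of an indegree-`d`-constrained rank-`r` maxout network with `ℓ` hidden layers. -/
def Nhat (n : ℕ) (d r : ℕ → ℕ) : ℕ → Set ((Vec n) → ℝ)
  | 0 => {f | ∃ v : Vec n, f = fun x => ∑ i, v i * x i}
  | (k+1) => {f | ∃ (α : Fin (r (k+1)) → Fin (d (k+1)) → ℝ)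
      (g : Fin (d (k+1)) → (Vec n) → ℝ),
      (∀ j, g j ∈ Nhat n d r k) ∧
      f = fun x => ⨆ i, ∑ j, α i j * g j x}

/-- `N_n(ℓ,d,r)`: finite real linear combinations of functions in `N̂_ℓ`. -/
def Nfull (n : ℕ) (d r : ℕ → ℕ) (ℓ : ℕ) : Set ((Vec n) → ℝ) :=
  {f | ∃ (p : ℕ) (c : Fin p → ℝ) (g : Fin p → (Vec n) → ℝ),
    (∀ i, g i ∈ Nhat n d r ℓ) ∧ f = fun x => ∑ i, c i * g i x}

/-- Unconstrained single-neuron classes `N̂_ℓ` (no indegree constraint). -/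
def NhatU (n : ℕ) (r : ℕ → ℕ) : ℕ → Set ((Vec n) → ℝ)
  | 0 => {f | ∃ v : Vec n, f = fun x => ∑ i, v i * x i}
  | (k+1) => {f | ∃ (m : ℕ) (α : Fin (r (k+1)) → Fin m → ℝ)
      (g : Fin m → (Vec n) → ℝ),
      (∀ j, g j ∈ NhatU n r k) ∧
      f = fun x => ⨆ i, ∑ j, α i j * g j x}

/-- `N_n(ℓ,r)`: finite real linear combinations of functions in the unconstrained `N̂_ℓ`. -/
def NfullU (n : ℕ) (r : ℕ → ℕ) (ℓ : ℕ) : Set ((Vec n) → ℝ) :=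
  {f | ∃ (p : ℕ) (c : Fin p → ℝ) (g : Fin p → (Vec n) → ℝ),
    (∀ i, g i ∈ NhatU n r ℓ) ∧ f = fun x => ∑ i, c i * g i x}

/-- `MAX_n(m)`: finite real linear combinations of maxima of at most `m` linear functions. -/
def MAXn (n m : ℕ) : Set ((Vec n) → ℝ) :=
  {f | ∃ (p : ℕ) (β : Fin p → ℝ) (a : Fin p → Fin m → Vec n),
    f = fun x => ∑ i, β i * ⨆ j, ∑ t, a i j t * x t}

/-!
Every function of `N̂_k` (indegrees `d`, ranks `r`) is affine along a subspace of codimension at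
most `m_k`: a maxout neuron whose `d_{k+1}` inputs are affine along subspaces of codimension `m_k`
is affine along their intersection cut down by the `r_{k+1} - 1` equations that make the slopes of
its affine pieces agree, whence `m_{k+1} = d_{k+1} m_k + r_{k+1} - 1`. Restricted to the first
`m_ℓ + 1` coordinates, every summand of an element of `N_n(ℓ,d,r)` is therefore affine along some
nonzero direction, and an iterated finite difference along suitably scaled copies of these
directions annihilates it. The two-layer rank-2 function `(x₁⁺ + ⋯ + x_m⁺ - x₀)⁺` survives every
such difference, because its translates are linearly independent: slicing along `x₀` and then
along one coordinate at a time recovers the translation vector.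
-/

open Finset

section FiberSums

variable {ι : Type*} [Fintype ι]

def FiberSumsVanish {β : Type*} [DecidableEq β] (c : ι → ℝ) (φ : ι → β) : Prop :=
  ∀ b, ∑ α with φ α = b, c α = 0

variable {β γ : Type*} [DecidableEq β] [DecidableEq γ] {c : ι → ℝ} {φ : ι → β}

theorem FiberSumsVanish.comp (h : FiberSumsVanish c φ) (g : β → γ) :
    FiberSumsVanish c (g ∘ φ) := by
  intro b
  rw [← sum_fiberwise_of_maps_to (t := (univ.image φ).filter (g · = b)) (g := φ)
    (fun α hα => by simpa using hα)]
  refine sum_eq_zero fun y hy => ?_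
  simp only [mem_filter] at hy
  rw [filter_filter,
    filter_congr fun α _ => and_iff_right_of_imp fun h : φ α = y => by simp [h, hy.2]]
  exact h y

theorem FiberSumsVanish.eq_zero_of_injective (h : FiberSumsVanish c φ)
    (hφ : Function.Injective φ) : c = 0 := by
  funext α
  have hfib : univ.filter (fun a => φ a = φ α) = {α} := by ext; simp [hφ.eq_iff]
  simpa [hfib] using h (φ α)

theorem fiberSumsVanish_prod_iff {ψ : ι → γ} :
    FiberSumsVanish c (fun α => (φ α, ψ α)) ↔
      ∀ a, FiberSumsVanish (fun α => if φ α = a then c α else 0) ψ := by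
  simp only [FiberSumsVanish, sum_filter, Prod.forall, Prod.mk.injEq, ite_and]
  exact forall_congr' fun a => forall_congr' fun b => by
    simp only [← ite_and, and_comm]

end FiberSums

section PosPartTranslates

variable {ι : Type*} [Fintype ι] {c : ι → ℝ}

theorem exists_pos_forall_le_abs_sub (s : Finset ℝ) (v : ℝ) :
    ∃ δ > 0, ∀ x ∈ s, x ≠ v → δ ≤ |x - v| := by
  obtain ⟨δ, hδ, hball⟩ :=
    Metric.isOpen_iff.mp (s.erase v).finite_toSet.isClosed.isOpen_compl v (by simp)
  refine ⟨δ, hδ, fun x hx hxv => ?_⟩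
  by_contra! hlt
  exact hball (by simpa [Real.dist_eq] using hlt) (by simp [hx, hxv])

/-- The jump of the step function `u ↦ ∑_{a α ≤ u} c α` at `v` is the fibre sum over `v`. -/
theorem fiberSumsVanish_of_sum_le_eq_zero (a : ι → ℝ) (B : Finset ℝ)
    (h : ∀ u ∉ B, ∑ α with a α ≤ u, c α = 0) : FiberSumsVanish c a := by
  intro v
  obtain ⟨δ, hδ, hgap⟩ := exists_pos_forall_le_abs_sub (univ.image a) v
  obtain ⟨u₁, hu₁, hu₁B⟩ := (Set.Ioo_infinite (by linarith : v < v + δ)).exists_notMem_finset B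
  obtain ⟨u₂, hu₂, hu₂B⟩ := (Set.Ioo_infinite (by linarith : v - δ < v)).exists_notMem_finset B
  have hsplit : ∑ α with a α ≤ u₁, c α = ∑ α with a α = v, c α + ∑ α with a α ≤ u₂, c α := by
    simp only [sum_filter, ← sum_add_distrib]
    refine sum_congr rfl fun α _ => ?_
    by_cases hv : a α = v
    · simp [hv, hu₁.1.le, not_le.mpr hu₂.2]
    · have := hgap (a α) (mem_image_of_mem a (mem_univ α)) hv
      have hiff : a α ≤ u₁ ↔ a α ≤ u₂ := by
        constructor <;> intro <;> cases abs_cases (a α - v) <;>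
          linarith [hu₁.1, hu₁.2, hu₂.1, hu₂.2]
      simp [hv, hiff]
  linarith [hsplit, h u₁ hu₁B, h u₂ hu₂B]

theorem fiberSumsVanish_of_sum_mul_posPart_eq_zero (a : ι → ℝ)
    (h : ∀ t, ∑ α, c α * (a α + t)⁺ = 0) : FiberSumsVanish c a := by
  intro v
  obtain ⟨δ, hδ, hgap⟩ := exists_pos_forall_le_abs_sub (univ.image a) v
  -- the second difference of `x ↦ x⁺` with step `δ` at `x` is `δ` if `x = 0` and `0` if `|x| ≥ δ`
  have hdiff : ∀ α, (a α + (δ - v))⁺ + (a α + (-δ - v))⁺ - 2 * (a α + -v)⁺ =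
      if a α = v then δ else 0 := by
    intro α
    by_cases hv : a α = v
    · simp [hv, posPart_of_nonneg hδ.le, posPart_of_nonpos (by linarith : -δ ≤ 0)]
    · have := hgap (a α) (mem_image_of_mem a (mem_univ α)) hv
      rcases abs_cases (a α - v) with ⟨habs, -⟩ | ⟨habs, -⟩
      · rw [posPart_of_nonneg (by linarith), posPart_of_nonneg (by linarith),
          posPart_of_nonneg (by linarith), if_neg hv]
        ring
      · rw [posPart_of_nonpos (by linarith), posPart_of_nonpos (by linarith),
          posPart_of_nonpos (by linarith), if_neg hv]
        ring
  have hsum : δ * ∑ α with a α = v, c α = 0 := by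
    calc δ * ∑ α with a α = v, c α
        = ∑ α, c α * ((a α + (δ - v))⁺ + (a α + (-δ - v))⁺ - 2 * (a α + -v)⁺) := by
          simp only [hdiff, sum_filter, mul_sum, mul_ite, mul_zero, mul_comm]
      _ = 0 := by
          simp only [mul_sub, mul_add, sum_sub_distrib, sum_add_distrib, mul_left_comm _ (2 : ℝ),
            ← mul_sum, h, mul_zero, sub_zero, add_zero]
  exact (mul_eq_zero.mp hsum).resolve_left hδ.ne'

theorem fiberSumsVanish_prod_of_posPart (a b : ι → ℝ)
    (h : ∀ t, FiberSumsVanish c (fun α => (t + a α)⁺ + b α)) :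
    FiberSumsVanish c (fun α => (a α, b α)) := by
  suffices hswap : FiberSumsVanish c (fun α => (b α, a α)) from hswap.comp Prod.swap
  refine fiberSumsVanish_prod_iff.mpr fun b₀ => ?_
  refine fiberSumsVanish_of_sum_le_eq_zero a (univ.image fun α => a α + b α - b₀) fun u hu => ?_
  refine Eq.trans ?_ (h (-u) b₀)
  rw [sum_filter, sum_filter]
  refine sum_congr rfl fun α _ => ?_
  by_cases hau : a α ≤ u
  · simp [hau]
  · have hne : -u + a α + b α ≠ b₀ := fun he => hu (mem_image.mpr ⟨α, mem_univ α, by linarith⟩)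
    simp [hau, posPart_of_nonneg (by linarith : 0 ≤ -u + a α), hne]

end PosPartTranslates

theorem fiberSumsVanish_of_sum_posPart {ι : Type*} [Fintype ι] {K : ℕ} (s : ι → Fin K → ℝ)
    (b c : ι → ℝ) (h : ∀ y : Fin K → ℝ, FiberSumsVanish c (fun α => ∑ j, (y j + s α j)⁺ - b α)) :
    FiberSumsVanish c (fun α => (s α, b α)) := by
  induction K generalizing c with
  | zero =>
    have hs : ∀ α, s α = finZeroElim := fun α => funext (Fin.elim0 ·)
    simpa [Function.comp_def, hs] using
      (h finZeroElim).comp fun x => ((finZeroElim : Fin 0 → ℝ), -x)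
  | succ K ih =>
    have hhead : ∀ y : Fin K → ℝ, FiberSumsVanish c
        (fun α => (s α 0, ∑ j, (y j + Fin.tail (s α) j)⁺ - b α)) := fun y =>
      fiberSumsVanish_prod_of_posPart _ _ fun t => by
        simpa [Fin.sum_univ_succ, Fin.tail, add_sub_assoc] using h (Fin.cons t y)
    have htail := fun a => ih (fun α => Fin.tail (s α)) _
      fun y => fiberSumsVanish_prod_iff.mp (hhead y) a
    simpa [Function.comp_def, Fin.cons_self_tail] using
      (fiberSumsVanish_prod_iff.mpr htail).comp
        fun p => ((Fin.cons p.1 p.2.1 : Fin (K + 1) → ℝ), p.2.2)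

def nestedRelu (K : ℕ) (z : Fin (K + 1) → ℝ) : ℝ :=
  ((∑ j : Fin K, (z j.succ)⁺) - z 0)⁺

theorem linearIndependent_nestedRelu_translates {ι : Type*} [Fintype ι] (K : ℕ)
    {a : ι → Fin (K + 1) → ℝ} (ha : Function.Injective a) :
    LinearIndependent ℝ (fun α y => nestedRelu K (y + a α)) := by
  refine Fintype.linearIndependent_iff.mpr fun c hc => ?_
  have hfib : ∀ y : Fin K → ℝ,
      FiberSumsVanish c (fun α => ∑ j, (y j + Fin.tail (a α) j)⁺ - a α 0) := fun y =>
    fiberSumsVanish_of_sum_mul_posPart_eq_zero _ fun t => by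
      simpa [nestedRelu, Fin.sum_univ_succ, Fin.tail, add_comm, sub_eq_add_neg, add_assoc,
        add_left_comm] using congrFun hc (Fin.cons (-t) y)
  have hinj : Function.Injective fun α => (Fin.tail (a α), a α 0) := fun α β hαβ => by
    simp only [Prod.mk.injEq] at hαβ
    exact ha (by rw [← Fin.cons_self_tail (a α), ← Fin.cons_self_tail (a β), hαβ.1, hαβ.2])
  exact congrFun ((fiberSumsVanish_of_sum_posPart _ _ c hfib).eq_zero_of_injective hinj)

section IteratedDiff

variable {V ι : Type*} [AddCommGroup V] [Fintype ι]

/-- The iterated difference `∏ⱼ (1 - τ_{v j})` applied to `h`, where `τ_w h = h (· + w)`. -/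
def iteratedDiff (v : ι → V) (h : V → ℝ) (x : V) : ℝ :=
  ∑ S : Finset ι, (-1) ^ S.card * h (x + ∑ j ∈ S, v j)

theorem iteratedDiff_sum {κ : Type*} (v : ι → V) (s : Finset κ) (h : κ → V → ℝ) :
    iteratedDiff v (fun x => ∑ k ∈ s, h k x) = fun x => ∑ k ∈ s, iteratedDiff v (h k) x := by
  funext x
  simp only [iteratedDiff, mul_sum]
  exact sum_comm

/-- One difference turns `h` into a constant, which any second difference kills. -/
theorem iteratedDiff_eq_zero [DecidableEq ι] [Nontrivial ι] (v : ι → V) (h : V → ℝ) (i : ι) (κ : ℝ)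
    (hh : ∀ x, h (x + v i) = h x + κ) : iteratedDiff v h = 0 := by
  funext x
  have hpair : ∀ S ∈ (univ.erase i).powerset,
      (-1 : ℝ) ^ S.card * h (x + ∑ j ∈ S, v j) +
        (-1) ^ (insert i S).card * h (x + ∑ j ∈ insert i S, v j) = -κ * (-1) ^ S.card := by
    intro S hS
    have hiS : i ∉ S := fun hi => by simpa using mem_powerset.mp hS hi
    rw [sum_insert hiS, card_insert_of_notMem hiS,
      show x + (v i + ∑ j ∈ S, v j) = x + ∑ j ∈ S, v j + v i by abel, hh, pow_succ]
    ring
  obtain ⟨j, hji⟩ := exists_ne i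
  have hne : univ.erase i ≠ ∅ := ne_empty_of_mem (mem_erase.mpr ⟨hji, mem_univ j⟩)
  have halt : ∑ S ∈ (univ.erase i).powerset, (-1 : ℝ) ^ S.card = 0 := by
    exact_mod_cast (sum_powerset_neg_one_pow_card (x := univ.erase i)).trans (if_neg hne)
  rw [iteratedDiff, ← powerset_univ, ← insert_erase (mem_univ i),
    sum_powerset_insert (notMem_erase i _), ← sum_add_distrib, sum_congr rfl hpair, ← mul_sum, halt, mul_zero, Pi.zero_apply]

end IteratedDiff

theorem exists_injective_sum_smul {V ι : Type*} [AddCommGroup V] [Module ℝ V] [Fintype ι]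
    [DecidableEq ι] {v : ι → V} (hv : ∀ i, v i ≠ 0) :
    ∃ c : ι → ℝ, Function.Injective fun S : Finset ι => ∑ j ∈ S, c j • v j := by
  let Φ : Finset ι → (ι → ℝ) →ₗ[ℝ] V := fun S => ∑ j ∈ S, (LinearMap.proj j).smulRight (v j)
  have hΦ : ∀ S c, Φ S c = ∑ j ∈ S, c j • v j := fun S c => by simp [Φ]
  have hproper : ∀ p : {p : Finset ι × Finset ι // p.1 ≠ p.2},
      LinearMap.ker (Φ p.1.1 - Φ p.1.2) ≠ ⊤ := by
    rintro ⟨⟨S, T⟩, hST⟩ htop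
    obtain ⟨j, hj⟩ : ∃ j, ¬(j ∈ S ↔ j ∈ T) := by simpa [Finset.ext_iff] using hST
    have hsingle : ∀ U, Φ U (Pi.single j 1) = if j ∈ U then v j else 0 := fun U => by
      simp [hΦ, Pi.single_apply, ite_smul]
    have h0 := LinearMap.mem_ker.mp (htop ▸ Submodule.mem_top : Pi.single j 1 ∈ _)
    rw [LinearMap.sub_apply, sub_eq_zero, hsingle, hsingle] at h0
    split_ifs at h0 with hjS hjT hjT
    · exact hj (iff_of_true hjS hjT)
    · exact hv j h0
    · exact hv j h0.symm
    · exact hj (iff_of_false hjS hjT)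
  obtain ⟨c, hc⟩ : ∃ c, ∀ p : {p : Finset ι × Finset ι // p.1 ≠ p.2},
      c ∉ LinearMap.ker (Φ p.1.1 - Φ p.1.2) := by
    by_contra! hcover
    obtain ⟨p, hp⟩ := Subspace.exists_eq_top_of_iUnion_eq_univ
      (Set.eq_univ_of_forall fun c => Set.mem_iUnion.mpr (hcover c))
    exact hproper p hp
  refine ⟨c, fun S T hST => by_contra fun hne => hc ⟨(S, T), hne⟩ ?_⟩
  simpa [hΦ, sub_eq_zero] using hST

theorem iteratedDiff_nestedRelu_ne_zero {K : ℕ} {ι : Type*} [Fintype ι] [DecidableEq ι]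
    {v : ι → Fin (K + 1) → ℝ} (hv : Function.Injective fun S : Finset ι => ∑ j ∈ S, v j) :
    iteratedDiff v (nestedRelu K) ≠ 0 := by
  intro h0
  have := Fintype.linearIndependent_iff.mp (linearIndependent_nestedRelu_translates K hv)
    (fun S => (-1) ^ S.card) (by simpa [iteratedDiff, funext_iff] using h0) ∅
  simp at this

section AffineAlong

variable {E : Type*} [AddCommGroup E] [Module ℝ E]

def IsAffineAlong (K : Submodule ℝ E) (L : E →ₗ[ℝ] ℝ) (f : E → ℝ) : Prop :=
  ∀ x, ∀ w ∈ K, f (x + w) = f x + L w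

theorem IsAffineAlong.mono {K K' : Submodule ℝ E} {L : E →ₗ[ℝ] ℝ} {f : E → ℝ}
    (h : IsAffineAlong K L f) (hK : K' ≤ K) : IsAffineAlong K' L f :=
  fun x w hw => h x w (hK hw)

theorem isAffineAlong_sum {κ : Type*} [Fintype κ] {K : Submodule ℝ E} {L : κ → E →ₗ[ℝ] ℝ}
    {g : κ → E → ℝ} (h : ∀ j, IsAffineAlong K (L j) (g j)) (a : κ → ℝ) :
    IsAffineAlong K (∑ j, a j • L j) (fun x => ∑ j, a j * g j x) := fun x w hw => by
  simp only [h _ x w hw, LinearMap.sum_apply, LinearMap.smul_apply, smul_eq_mul, mul_add,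
    sum_add_distrib]

theorem isAffineAlong_iSup {ι : Type*} [Finite ι] {K : Submodule ℝ E} {L : ι → E →ₗ[ℝ] ℝ}
    {f : ι → E → ℝ} (h : ∀ i, IsAffineAlong K (L i) (f i)) (i₀ : ι) :
    IsAffineAlong (K ⊓ ⨅ i, LinearMap.ker (L i - L i₀)) (L i₀) (fun x => ⨆ i, f i x) := by
  intro x w hw
  obtain ⟨hwK, hwL⟩ := Submodule.mem_inf.mp hw
  have hslope : ∀ i, f i (x + w) = f i x + L i₀ w := fun i => by
    have := LinearMap.mem_ker.mp (Submodule.mem_iInf _ |>.mp hwL i)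
    rw [h i x w hwK, ← sub_eq_zero.mp this]
  have : Nonempty ι := ⟨i₀⟩
  simp only [hslope, ciSup_add (Set.finite_range _).bddAbove]

def AffineInCodim (m : ℕ) (f : E → ℝ) : Prop :=
  ∃ (K : Submodule ℝ E) (L : E →ₗ[ℝ] ℝ), Module.finrank ℝ E ≤ Module.finrank ℝ K + m ∧
    IsAffineAlong K L f

variable [FiniteDimensional ℝ E]

theorem finrank_le_finrank_ker_add_one (L : E →ₗ[ℝ] ℝ) :
    Module.finrank ℝ E ≤ Module.finrank ℝ (LinearMap.ker L) + 1 := by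
  have := Submodule.finrank_le (LinearMap.range L)
  rw [Module.finrank_self] at this
  linarith [LinearMap.finrank_range_add_finrank_ker L]

theorem finrank_le_finrank_inf_add {K₁ K₂ : Submodule ℝ E} {m₁ m₂ : ℕ}
    (h₁ : Module.finrank ℝ E ≤ Module.finrank ℝ K₁ + m₁)
    (h₂ : Module.finrank ℝ E ≤ Module.finrank ℝ K₂ + m₂) :
    Module.finrank ℝ E ≤ Module.finrank ℝ ↥(K₁ ⊓ K₂) + (m₁ + m₂) := by
  linarith [Submodule.finrank_sup_add_finrank_inf_eq K₁ K₂, Submodule.finrank_le (K₁ ⊔ K₂)]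

theorem finrank_le_finrank_iInf_add {κ : Type*} [Fintype κ] (K : κ → Submodule ℝ E)
    (m : κ → ℕ) (h : ∀ j, Module.finrank ℝ E ≤ Module.finrank ℝ (K j) + m j) :
    Module.finrank ℝ E ≤ Module.finrank ℝ ↥(⨅ j, K j) + ∑ j, m j := by
  classical
  rw [← Finset.inf_univ_eq_iInf]
  induction (univ : Finset κ) using Finset.induction_on with
  | empty => rw [Finset.inf_empty, finrank_top]; omega
  | insert j s hj ih =>
    rw [inf_insert, sum_insert hj]
    exact finrank_le_finrank_inf_add (h j) ih

theorem AffineInCodim.maxout {ι κ : Type*} [Fintype ι] [Fintype κ] {m : ℕ} {g : κ → E → ℝ}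
    (hg : ∀ j, AffineInCodim m (g j)) (α : ι → κ → ℝ) :
    AffineInCodim (Fintype.card κ * m + (Fintype.card ι - 1))
      (fun x => ⨆ i, ∑ j, α i j * g j x) := by
  classical
  choose K L hK hgK using hg
  have hmeet := finrank_le_finrank_iInf_add K (fun _ => m) hK
  rw [sum_const, card_univ, smul_eq_mul] at hmeet
  cases isEmpty_or_nonempty ι with
  | inl hι => exact ⟨⊤, 0, by simp, fun x w _ => by simp [Real.iSup_of_isEmpty]⟩
  | inr hι =>
    obtain ⟨i₀⟩ := hι
    let Λ : ι → E →ₗ[ℝ] ℝ := fun i => ∑ j, α i j • L j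
    have hker : Module.finrank ℝ E ≤
        Module.finrank ℝ ↥(⨅ i, LinearMap.ker (Λ i - Λ i₀)) + (Fintype.card ι - 1) := by
      refine (finrank_le_finrank_iInf_add (fun i => LinearMap.ker (Λ i - Λ i₀))
        (fun i => if i = i₀ then 0 else 1) fun i => ?_).trans_eq
        (by simp [sum_ite, filter_ne', card_erase_of_mem])
      split_ifs with hi
      · rw [hi, sub_self, LinearMap.ker_zero, finrank_top]
        omega
      · exact finrank_le_finrank_ker_add_one _
    refine ⟨_, _, finrank_le_finrank_inf_add hmeet hker, isAffineAlong_iSup (fun i => ?_) i₀⟩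
    exact isAffineAlong_sum (fun j => (hgK j).mono (iInf_le K j)) (α i)

end AffineAlong

theorem AffineInCodim.comp {V E : Type*} [AddCommGroup V] [Module ℝ V] [FiniteDimensional ℝ V]
    [AddCommGroup E] [Module ℝ E] [FiniteDimensional ℝ E] {m : ℕ} {f : E → ℝ}
    (h : AffineInCodim m f) (φ : V →ₗ[ℝ] E) : AffineInCodim m (f ∘ φ) := by
  obtain ⟨K, L, hK, hf⟩ := h
  refine ⟨K.comap φ, L ∘ₗ φ, ?_, fun x w hw => by simpa using hf (φ x) (φ w) hw⟩
  have hker : K.comap φ = LinearMap.ker (K.mkQ ∘ₗ φ) := by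
    rw [LinearMap.ker_comp, Submodule.ker_mkQ]
  rw [hker]
  linarith [LinearMap.finrank_range_add_finrank_ker (K.mkQ ∘ₗ φ),
    Submodule.finrank_le (LinearMap.range (K.mkQ ∘ₗ φ)), Submodule.finrank_quotient_add_finrank K]

theorem AffineInCodim.exists_ne_zero {E : Type*} [AddCommGroup E] [Module ℝ E]
    [FiniteDimensional ℝ E] {m : ℕ} {f : E → ℝ} (h : AffineInCodim m f)
    (hm : m < Module.finrank ℝ E) : ∃ z ≠ 0, ∃ L, IsAffineAlong (ℝ ∙ z) L f := by
  obtain ⟨K, L, hK, hf⟩ := h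
  obtain ⟨z, hzK, hz⟩ :=
    Submodule.exists_mem_ne_zero_of_ne_bot ((Submodule.one_le_finrank_iff (S := K)).mp (by omega))
  exact ⟨z, hz, L, hf.mono ((Submodule.span_singleton_le_iff_mem z K).mpr hzK)⟩

theorem nestedRelu_ne_sum {K : ℕ} {κ : Type*} [Fintype κ] (c : κ → ℝ)
    (h : κ → (Fin (K + 1) → ℝ) → ℝ) (hh : ∀ i, AffineInCodim K (h i)) :
    nestedRelu K ≠ fun y => ∑ i, c i * h i y := by
  classical
  choose z hz L hL using fun i => (hh i).exists_ne_zero (by simp)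
  -- an extra direction keeps a second difference available even when `κ` has one element
  let w : Option κ → Fin (K + 1) → ℝ := fun o => o.elim (Pi.single 0 1) z
  have hw : ∀ o, w o ≠ 0 := by
    rintro (_ | i)
    · simp [w]
    · exact hz i
  obtain ⟨a, ha⟩ := exists_injective_sum_smul hw
  intro heq
  apply iteratedDiff_nestedRelu_ne_zero ha
  rw [heq, iteratedDiff_sum (fun o => a o • w o) univ]
  funext x
  refine sum_eq_zero fun i _ => ?_
  have : Nontrivial (Option κ) := ⟨⟨none, some i, Option.some_ne_none i |>.symm⟩⟩
  refine congrFun (iteratedDiff_eq_zero _ _ (some i) (c i * L i (a (some i) • z i)) fun y => ?_) x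
  change c i * h i (y + a (some i) • z i) = _
  rw [hL i y _ (Submodule.smul_mem _ _ (Submodule.mem_span_singleton_self _)), mul_add]

section Networks

variable {n : ℕ} {d r : ℕ → ℕ}

theorem mval_succ (d r : ℕ → ℕ) (k : ℕ) :
    mval d r (k + 1) = d (k + 1) * mval d r k + (r (k + 1) - 1) := by
  rw [mval, mval, sum_Icc_succ_top (by omega),
    show Icc (k + 1 + 1) (k + 1) = ∅ from Icc_eq_empty (by omega), prod_empty, mul_one, mul_sum]
  congr 1
  refine sum_congr rfl fun j hj => ?_
  rw [prod_Icc_succ_top (by simp at hj; omega)]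
  ring

theorem affineInCodim_of_mem_Nhat :
    ∀ {k : ℕ} {f : Vec n → ℝ}, f ∈ Nhat n d r k → AffineInCodim (mval d r k) f
  | 0, _, ⟨v, hf⟩ => ⟨⊤, ∑ i, v i • LinearMap.proj i, by simp, fun x w _ => by
      simp [hf, mul_add, sum_add_distrib]⟩
  | k + 1, _, ⟨α, g, hg, hf⟩ => by
    simpa [hf, mval_succ] using AffineInCodim.maxout (fun j => affineInCodim_of_mem_Nhat (hg j)) α

theorem Nhat_subset_NhatU : ∀ k, Nhat n d r k ⊆ NhatU n r k
  | 0 => fun _ hf => hf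
  | k + 1 => fun _ ⟨α, g, hg, hf⟩ => ⟨d (k + 1), α, g, fun j => Nhat_subset_NhatU k (hg j), hf⟩

theorem Nfull_subset_NfullU (ℓ : ℕ) : Nfull n d r ℓ ⊆ NfullU n r ℓ :=
  fun _ ⟨p, c, g, hg, hf⟩ => ⟨p, c, g, fun i => Nhat_subset_NhatU ℓ (hg i), hf⟩

theorem mem_NhatU_succ {k : ℕ} (hr : 1 ≤ r (k + 1)) {f : Vec n → ℝ} (hf : f ∈ NhatU n r k) :
    f ∈ NhatU n r (k + 1) := by
  have : Nonempty (Fin (r (k + 1))) := ⟨⟨0, hr⟩⟩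
  exact ⟨1, fun _ _ => 1, fun _ => f, fun _ => hf, by simp⟩

theorem posPart_sum_mem_NhatU_succ {k m : ℕ} (hr : 2 ≤ r (k + 1)) (β : Fin m → ℝ)
    {g : Fin m → Vec n → ℝ} (hg : ∀ j, g j ∈ NhatU n r k) :
    (fun x => (∑ j, β j * g j x)⁺) ∈ NhatU n r (k + 1) := by
  refine ⟨m, fun i j => if (i : ℕ) = 0 then β j else 0, g, hg, funext fun x => ?_⟩
  simp only [ite_mul, zero_mul, sum_ite_irrel, sum_const_zero]
  have : Nonempty (Fin (r (k + 1))) := ⟨⟨0, by omega⟩⟩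
  have hbdd := (Set.finite_range fun i : Fin (r (k + 1)) =>
    if (i : ℕ) = 0 then ∑ j, β j * g j x else 0).bddAbove
  refine le_antisymm (sup_le ?_ ?_) (ciSup_le fun i => ?_)
  · exact le_ciSup_of_le hbdd ⟨0, by omega⟩ (by simp)
  · exact le_ciSup_of_le hbdd ⟨1, hr⟩ (by simp)
  · split_ifs
    · exact le_posPart _
    · exact posPart_nonneg _

def sepFn (n K : ℕ) (hK : K + 1 ≤ n) : Vec n → ℝ :=
  nestedRelu K ∘ LinearMap.funLeft ℝ ℝ (Fin.castLE hK)

theorem sepFn_mem_NhatU_two {K : ℕ} (hK : K + 1 ≤ n) (hr₁ : 2 ≤ r 1) (hr₂ : 2 ≤ r 2) :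
    sepFn n K hK ∈ NhatU n r 2 := by
  let coord : Fin (K + 1) → Fin n := Fin.castLE hK
  have hlin : ∀ s i, (fun x : Vec n => s * x (coord i)) ∈ NhatU n r 0 := fun s i =>
    ⟨Pi.single (coord i) s, by simp [Pi.single_apply]⟩
  have hrelu : ∀ i, (fun x : Vec n => (x (coord i))⁺) ∈ NhatU n r 1 := fun i => by
    simpa using posPart_sum_mem_NhatU_succ hr₁ (fun _ : Fin 1 => 1) fun _ => hlin 1 i
  have hneg : (fun x : Vec n => -1 * x (coord 0)) ∈ NhatU n r 1 :=
    mem_NhatU_succ (one_le_two.trans hr₁) (hlin (-1) 0)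
  have hsep := posPart_sum_mem_NhatU_succ hr₂ (fun _ => 1)
    (g := Fin.cons (fun x => -1 * x (coord 0)) fun j x => (x (coord j.succ))⁺)
    (Fin.cases hneg fun j => hrelu j.succ)
  convert hsep using 2 with x
  simp [sepFn, nestedRelu, Fin.sum_univ_succ, coord, sub_eq_neg_add]

theorem sepFn_mem_NfullU {ℓ K : ℕ} (hK : K + 1 ≤ n) (hr : ∀ k, 2 ≤ r k) (hℓ : 2 ≤ ℓ) :
    sepFn n K hK ∈ NfullU n r ℓ := by
  have hmem : sepFn n K hK ∈ NhatU n r ℓ := by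
    induction ℓ, hℓ using Nat.le_induction with
    | base => exact sepFn_mem_NhatU_two hK (hr 1) (hr 2)
    | succ k _ ih => exact mem_NhatU_succ (by linarith [hr (k + 1)]) ih
  exact ⟨1, fun _ => 1, fun _ => sepFn n K hK, fun _ => hmem, by simp⟩

theorem sepFn_not_mem_Nfull {ℓ : ℕ} (hK : mval d r ℓ + 1 ≤ n) :
    sepFn n (mval d r ℓ) hK ∉ Nfull n d r ℓ := by
  rintro ⟨p, c, g, hg, hf⟩
  let emb := Function.ExtendByZero.linearMap ℝ (Fin.castLE hK)
  have hemb : ∀ y, LinearMap.funLeft ℝ ℝ (Fin.castLE hK) (emb y) = y := fun y =>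
    funext fun j => (Fin.castLE_injective hK).extend_apply _ _ _
  refine nestedRelu_ne_sum c (fun i => g i ∘ emb)
    (fun i => (affineInCodim_of_mem_Nhat (hg i)).comp emb) (funext fun y => ?_)
  simpa [sepFn, hemb] using congrFun hf (emb y)

end Networks

theorem Nfull_strict_subset_NfullU_general {n : ℕ} (ℓ : ℕ) (hℓ : 2 ≤ ℓ) (d r : ℕ → ℕ)
    (hr : ∀ k, 2 ≤ r k)
    (hn : mval d r ℓ + 1 ≤ n) :
    Nfull n d r ℓ ⊂ NfullU n r ℓ :=
  Set.ssubset_iff_subset_ne.mpr ⟨Nfull_subset_NfullU ℓ, fun h =>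
    sepFn_not_mem_Nfull hn (h ▸ sepFn_mem_NfullU hn hr hℓ)⟩

/-- width cannot compensate sparsity:
`N_n(ℓ,d,r) ⊊ N_n(ℓ,r)` whenever `n ≥ m_ℓ + 1`. -/
theorem Nfull_strict_subset_NfullU {n : ℕ} (ℓ : ℕ) (hℓ : 2 ≤ ℓ) (d r : ℕ → ℕ)
    (hd1 : d 1 = n) (hd : ∀ k, 2 ≤ d k) (hr : ∀ k, 2 ≤ r k)
    (hn : mval d r ℓ + 1 ≤ n) :
    Nfull n d r ℓ ⊂ NfullU n r ℓ :=
  Nfull_strict_subset_NfullU_general ℓ hℓ d r hr hn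
end SparseMaxout
end

section
/- Fix ℓ ∈ ℕ₀ and d = (d_1,…,d_ℓ), r = (r_1,…,r_ℓ) ∈ ℕ^ℓ with d_1 = n. If m ∈ ℕ satisfies m ≤ ∏_{i=1}^ℓ min{d_i, r_i}, then MAX_n(m) ⊆ N_n(ℓ,d,r): every finite real linear combination of maxima of at most m linear functions is computable by an indegree-d-constrained rank-r maxout network with ℓ hidden layers. In particular, if n < ∏_{i=1}^ℓ min{d_i, r_i}, then N_n(ℓ,d,r) contains every function of the form x ↦ max_{j∈[p]}⟨a_j,x⟩ − max_{k∈[q]}⟨b_k,x⟩ (p,q ∈ ℕ, a_j,b_k ∈ ℝ^n), i.e., every positively homogeneous continuous piecewise linear function. -/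
open Pointwise

noncomputable section SparseMaxout

/-! The first part holds because one neuron computes a maximum of `M = ∏ᵢ min(dᵢ, rᵢ)` linear
functions: split them into `min(d_ℓ, r_ℓ)` blocks of `∏_{i<ℓ} min(dᵢ, rᵢ)`, compute the maximum
of each block by induction, and let the last layer take the maximum of the blocks. Repeating
functions pads any `m ≤ M` up to `M`.

For the second part (Wang–Sun) it suffices to write the maximum over a finite set `T` of more
than `n + 1` points as a combination of maxima over proper subsets. Radon's theorem splits `T`
into `S` and `T \ S` with intersecting convex hulls, so for each `x` some `u ∈ S` is dominated by
some `w ∈ T \ S`; removing `u` then never changes a maximum over `T \ I` with `I ⊆ S`, and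
inclusion–exclusion over the subsets of `S` gives
`max_T = ∑_{∅ ≠ I ⊆ S} (-1)^(|I|+1) max_{T \ I}`. -/

open Finset Function

theorem exists_surjective_fin {k M : ℕ} (hk : 0 < k) (hkM : k ≤ M) :
    ∃ σ : Fin M → Fin k, Surjective σ :=
  haveI : Nonempty (Fin k) := ⟨⟨0, hk⟩⟩
  ⟨invFun (Fin.castLE hkM), invFun_surjective (Fin.castLE_injective hkM)⟩

theorem mem_span_iff_exists_fin_sum {α : Type*} {s : Set (α → ℝ)} {f : α → ℝ} :
    f ∈ Submodule.span ℝ s ↔ ∃ (p : ℕ) (c : Fin p → ℝ) (g : Fin p → α → ℝ),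
      (∀ i, g i ∈ s) ∧ f = fun x => ∑ i, c i * g i x := by
  rw [Submodule.mem_span_set']
  constructor
  · rintro ⟨p, c, g, rfl⟩
    exact ⟨p, c, fun i => g i, fun i => (g i).2, by ext x; simp [Finset.sum_apply]⟩
  · rintro ⟨p, c, g, hg, rfl⟩
    exact ⟨p, c, fun i => ⟨g i, hg i⟩, by ext x; simp [Finset.sum_apply]⟩

theorem sum_powerset_neg_one_pow_mul_eq_zero {α R : Type*} [DecidableEq α] [CommRing R]
    {S : Finset α} {a : α} (ha : a ∈ S) (F : Finset α → R)
    (hF : ∀ I ⊆ S.erase a, F (insert a I) = F I) :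
    ∑ I ∈ S.powerset, (-1 : R) ^ #I * F I = 0 := by
  rw [← insert_erase ha, sum_powerset_insert (notMem_erase a S), ← sum_add_distrib]
  refine sum_eq_zero fun I hI => ?_
  have haI : a ∉ I := fun h => notMem_erase a S (mem_powerset.1 hI h)
  rw [hF I (mem_powerset.1 hI), card_insert_of_notMem haI, pow_succ]
  ring

theorem exists_finset_radon_partition {E : Type*} [AddCommGroup E] [Module ℝ E]
    [FiniteDimensional ℝ E] [DecidableEq E] (T : Finset E) (hT : Module.finrank ℝ E + 2 ≤ #T) :
    ∃ S ⊆ T, ∀ φ : Module.Dual ℝ E, ∃ u ∈ S, ∃ w ∈ T \ S, φ u ≤ φ w := by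
  classical
  have hdep : ¬ AffineIndependent ℝ ((↑) : T → E) := fun h => by
    have := h.card_le_finrank_succ
    have := Submodule.finrank_le (vectorSpan ℝ (Set.range ((↑) : T → E)))
    simp only [Fintype.card_coe] at *
    omega
  obtain ⟨I, p, hpI, hpJ⟩ := Convex.radon_partition hdep
  refine ⟨T.filter fun v => ∃ h : v ∈ T, (⟨v, h⟩ : T) ∈ I, filter_subset _ _, fun φ => ?_⟩
  obtain ⟨_, ⟨i, hi, rfl⟩, hi'⟩ :=
    (φ.concaveOn convex_univ).exists_le_of_mem_convexHull (Set.subset_univ _) hpI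
  obtain ⟨_, ⟨j, hj, rfl⟩, hj'⟩ :=
    (φ.convexOn convex_univ).exists_ge_of_mem_convexHull (Set.subset_univ _) hpJ
  refine ⟨i, mem_filter.2 ⟨i.2, i.2, hi⟩, j, mem_sdiff.2 ⟨j.2, fun hjS => hj ?_⟩, hi'.trans hj'⟩
  obtain ⟨-, h, hjI⟩ := mem_filter.1 hjS
  exact hjI

def maxLinear (n k : ℕ) : Set (Vec n → ℝ) :=
  {f | ∃ b : Fin k → Vec n, f = fun x => ⨆ j, b j ⬝ᵥ x}

section

variable {n : ℕ}

theorem Nfull_eq_span (n : ℕ) (d r : ℕ → ℕ) (ℓ : ℕ) :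
    Nfull n d r ℓ = Submodule.span ℝ (Nhat n d r ℓ) :=
  Set.ext fun _ => mem_span_iff_exists_fin_sum.symm

theorem MAXn_subset_span_maxLinear (m : ℕ) : MAXn n m ⊆ Submodule.span ℝ (maxLinear n m) := by
  rintro f ⟨p, β, a, rfl⟩
  exact mem_span_iff_exists_fin_sum.2 ⟨p, β, _, fun i => ⟨a i, rfl⟩, rfl⟩

theorem maxLinear_subset_maxLinear {k M : ℕ} (hk : 0 < k) (hkM : k ≤ M) :
    maxLinear n k ⊆ maxLinear n M := by
  rintro f ⟨b, rfl⟩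
  obtain ⟨σ, hσ⟩ := exists_surjective_fin hk hkM
  exact ⟨b ∘ σ, funext fun x => (hσ.iSup_comp fun j => b j ⬝ᵥ x).symm⟩

theorem exists_iSup_eq_of_mem_maxLinear_mul {P c : ℕ} {f : Vec n → ℝ}
    (hf : f ∈ maxLinear n (P * c)) :
    ∃ G : Fin c → Vec n → ℝ, (∀ u, G u ∈ maxLinear n P) ∧ f = fun x => ⨆ u, G u x := by
  obtain ⟨b, rfl⟩ := hf
  let e : Fin c × Fin P ≃ Fin (P * c) := (Equiv.prodComm _ _).trans finProdFinEquiv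
  refine ⟨fun u x => ⨆ s, b (e (u, s)) ⬝ᵥ x, fun u => ⟨_, rfl⟩, funext fun x => ?_⟩
  rw [← e.iSup_comp, Finite.ciSup_prod]

theorem iSup_mem_Nhat_succ {d r : ℕ → ℕ} {k c : ℕ} (hc : 0 < c) (hcd : c ≤ d (k + 1))
    (hcr : c ≤ r (k + 1)) {G : Fin c → Vec n → ℝ} (hG : ∀ u, G u ∈ Nhat n d r k) :
    (fun x => ⨆ u, G u x) ∈ Nhat n d r (k + 1) := by
  obtain ⟨σ, hσ⟩ := exists_surjective_fin hc hcr
  obtain ⟨τ, hτ⟩ := exists_surjective_fin hc hcd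
  refine ⟨fun i j => if j = surjInv hτ (σ i) then 1 else 0, fun j => G (τ j), fun j => hG _,
    funext fun x => ?_⟩
  simp only [ite_mul, one_mul, zero_mul, Finset.sum_ite_eq', Finset.mem_univ, if_true,
    surjInv_eq hτ]
  exact (hσ.iSup_comp fun u => G u x).symm

theorem maxLinear_prod_subset_Nhat (d r : ℕ → ℕ) (ℓ : ℕ)
    (hpos : 0 < ∏ i ∈ Icc 1 ℓ, min (d i) (r i)) :
    maxLinear n (∏ i ∈ Icc 1 ℓ, min (d i) (r i)) ⊆ Nhat n d r ℓ := by
  induction ℓ with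
  | zero =>
    rw [Icc_eq_empty (by omega), prod_empty]
    rintro f ⟨b, rfl⟩
    exact ⟨b 0, funext fun x => ciSup_unique⟩
  | succ ℓ ih =>
    rw [prod_Icc_succ_top (by omega)] at hpos ⊢
    intro f hf
    obtain ⟨G, hG, rfl⟩ := exists_iSup_eq_of_mem_maxLinear_mul hf
    exact iSup_mem_Nhat_succ (Nat.pos_of_mul_pos_left hpos) (min_le_left _ _) (min_le_right _ _)
      fun u => ih (Nat.pos_of_mul_pos_right hpos) (hG u)

theorem iSup_dotProduct_eq_suppFn {k : ℕ} (b : Fin k → Vec n) :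
    (fun x => ⨆ j, b j ⬝ᵥ x) = suppFn (Set.range b) := by
  ext x; rw [suppFn, ← Set.range_comp]; rfl

theorem suppFn_mem_maxLinear {T : Finset (Vec n)} {k : ℕ} (hT : T.Nonempty) (hk : #T ≤ k) :
    suppFn ↑T ∈ maxLinear n k := by
  obtain ⟨σ, hσ⟩ := exists_surjective_fin hT.card_pos hk
  refine ⟨fun j => T.equivFin.symm (σ j), ?_⟩
  show suppFn ↑T = fun x => ⨆ j, (Subtype.val ∘ T.equivFin.symm ∘ σ) j ⬝ᵥ x
  rw [iSup_dotProduct_eq_suppFn, (T.equivFin.symm.surjective.comp hσ).range_comp,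
    Subtype.range_coe]

theorem suppFn_coe_eq_sup' (T : Finset (Vec n)) (hT : T.Nonempty) (x : Vec n) :
    suppFn (T : Set (Vec n)) x = T.sup' hT (· ⬝ᵥ x) :=
  (sup'_eq_csSup_image T hT _).symm

theorem suppFn_erase_of_le {U : Finset (Vec n)} {u w x : Vec n} (hw : w ∈ U) (hwu : w ≠ u)
    (h : u ⬝ᵥ x ≤ w ⬝ᵥ x) : suppFn ↑(U.erase u) x = suppFn ↑U x := by
  have hw' : w ∈ U.erase u := mem_erase.2 ⟨hwu, hw⟩
  rw [suppFn_coe_eq_sup' _ ⟨w, hw'⟩, suppFn_coe_eq_sup' _ ⟨w, hw⟩]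
  refine le_antisymm (sup'_mono _ (erase_subset u U) _) (sup'_le _ _ fun v hv => ?_)
  by_cases hvu : v = u
  · subst hvu; exact h.trans (le_sup' (· ⬝ᵥ x) hw')
  · exact le_sup' (· ⬝ᵥ x) (mem_erase.2 ⟨hvu, hv⟩)

theorem suppFn_eq_sum_powerset {T S : Finset (Vec n)} {x u w : Vec n}
    (hu : u ∈ S) (hw : w ∈ T \ S) (h : u ⬝ᵥ x ≤ w ⬝ᵥ x) :
    suppFn ↑T x = ∑ I ∈ S.powerset.erase ∅, -(-1) ^ #I * suppFn ↑(T \ I) x := by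
  obtain ⟨hwT, hwS⟩ := mem_sdiff.1 hw
  have key := sum_powerset_neg_one_pow_mul_eq_zero hu (fun I => suppFn ↑(T \ I) x)
    fun I hI => by
      rw [sdiff_insert]
      exact suppFn_erase_of_le (mem_sdiff.2 ⟨hwT, fun hwI => hwS (erase_subset u S (hI hwI))⟩)
        (ne_of_mem_of_not_mem hu hwS).symm h
  rw [← add_sum_erase _ _ (empty_mem_powerset S)] at key
  simp only [card_empty, pow_zero, one_mul, sdiff_empty] at key
  simp only [neg_mul, sum_neg_distrib]
  linarith

theorem suppFn_mem_span_maxLinear (T : Finset (Vec n)) (hT : T.Nonempty) :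
    suppFn ↑T ∈ Submodule.span ℝ (maxLinear n (n + 1)) := by
  induction T using Finset.strongInduction with
  | H T ih =>
    by_cases hsmall : #T ≤ n + 1
    · exact Submodule.subset_span (suppFn_mem_maxLinear hT hsmall)
    obtain ⟨S, hST, hsep⟩ :=
      exists_finset_radon_partition T (by simp only [Module.finrank_fin_fun]; omega)
    have hsum : suppFn ↑T =
        ∑ I ∈ S.powerset.erase ∅, (-(-1) ^ #I : ℝ) • suppFn (↑(T \ I) : Set (Vec n)) := by
      funext x
      obtain ⟨u, hu, w, hw, h⟩ := hsep ((dotProductBilin ℝ ℝ).flip x)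
      rw [suppFn_eq_sum_powerset hu hw h, Finset.sum_apply]
      rfl
    obtain ⟨-, -, w, hw, -⟩ := hsep 0
    rw [hsum]
    refine Submodule.sum_mem _ fun I hI => Submodule.smul_mem _ _ ?_
    obtain ⟨hI0, hIS⟩ : I ≠ ∅ ∧ I ⊆ S := by simpa using hI
    exact ih _ (sdiff_ssubset (hIS.trans hST) (nonempty_iff_ne_empty.2 hI0))
      ⟨w, mem_sdiff.2 ⟨(mem_sdiff.1 hw).1, fun hwI => (mem_sdiff.1 hw).2 (hIS hwI)⟩⟩

theorem maxLinear_subset_span_maxLinear_succ {p : ℕ} (hp : 0 < p) :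
    maxLinear n p ⊆ Submodule.span ℝ (maxLinear n (n + 1)) := by
  rintro f ⟨b, rfl⟩
  have : Nonempty (Fin p) := ⟨⟨0, hp⟩⟩
  rw [iSup_dotProduct_eq_suppFn, ← Set.image_univ, ← coe_univ, ← coe_image]
  exact suppFn_mem_span_maxLinear _ (univ_nonempty.image b)

end

theorem MAXn_subset_Nfull_general {n : ℕ} (ℓ : ℕ) (d r : ℕ → ℕ) (m : ℕ) (hm : 1 ≤ m)
    (hmb : m ≤ ∏ i ∈ Finset.Icc 1 ℓ, min (d i) (r i)) :
    MAXn n m ⊆ Nfull n d r ℓ ∧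
    (n < ∏ i ∈ Finset.Icc 1 ℓ, min (d i) (r i) →
      ∀ (p q : ℕ) (a : Fin p → Vec n) (b : Fin q → Vec n), 0 < p → 0 < q →
        (fun x : Vec n => (⨆ j, ∑ t, a j t * x t) - (⨆ k, ∑ t, b k t * x t)) ∈
          Nfull n d r ℓ) := by
  have hspan : ∀ k, 0 < k → k ≤ ∏ i ∈ Icc 1 ℓ, min (d i) (r i) →
      Submodule.span ℝ (maxLinear n k) ≤ Submodule.span ℝ (Nhat n d r ℓ) := fun k hk hkM =>
    Submodule.span_mono ((maxLinear_subset_maxLinear hk hkM).trans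
      (maxLinear_prod_subset_Nhat d r ℓ (by omega)))
  rw [Nfull_eq_span]
  refine ⟨(MAXn_subset_span_maxLinear m).trans (hspan m hm hmb), fun hnM p q a b hp hq => ?_⟩
  have hmax : ∀ {k : ℕ}, 0 < k → ∀ c : Fin k → Vec n,
      (fun x => ⨆ j, ∑ t, c j t * x t) ∈ Submodule.span ℝ (Nhat n d r ℓ) := fun hk c =>
    hspan (n + 1) n.succ_pos hnM <| Submodule.span_le.2
      (maxLinear_subset_span_maxLinear_succ hk) (Submodule.subset_span ⟨c, rfl⟩)
  exact Submodule.sub_mem _ (hmax hp a) (hmax hq b)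

/-- deep sparse maxout networks are universal:
`MAX_n(m) ⊆ N_n(ℓ,d,r)` when `m ≤ ∏_{i=1}^ℓ min{d_i, r_i}`; in particular, if
`n < ∏_{i=1}^ℓ min{d_i, r_i}` then every difference of two finite maxima of
linear functions lies in `N_n(ℓ,d,r)`. -/
theorem MAXn_subset_Nfull {n : ℕ} (ℓ : ℕ) (d r : ℕ → ℕ) (hd1 : d 1 = n)
    (hd : ∀ k, 1 ≤ d k) (hr : ∀ k, 1 ≤ r k) (m : ℕ) (hm : 1 ≤ m)
    (hmb : m ≤ ∏ i ∈ Finset.Icc 1 ℓ, min (d i) (r i)) :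
    MAXn n m ⊆ Nfull n d r ℓ ∧
    (n < ∏ i ∈ Finset.Icc 1 ℓ, min (d i) (r i) →
      ∀ (p q : ℕ) (a : Fin p → Vec n) (b : Fin q → Vec n), 0 < p → 0 < q →
        (fun x : Vec n => (⨆ j, ∑ t, a j t * x t) - (⨆ k, ∑ t, b k t * x t)) ∈
          Nfull n d r ℓ) :=
  MAXn_subset_Nfull_general ℓ d r m hm hmb
end SparseMaxout
end
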